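/- arXiv:2411.04506 — 6 statements merged into one kernel-verified Lean document; each statement's English description precedes it below -/
import Mathlib

section
/- Let A ∈ ℂ^{m×n}, L ∈ {0,1}^{m×r} and R ∈ {0,1}^{r×n}. Assume that the rank-one contribution supports U_1, …, U_r of (L, R) are pairwise either identical or disjoint. Then inf{ ‖A − XY‖_F² : X ∈ ℂ^{m×r}, Y ∈ ℂ^{r×n}, X[i,k] = 0 whenever L[i,k] = 0, Y[k,j] = 0 whenever R[k,j] = 0 } = Σ_{P ∈ P(L,R)} min{ ‖A[R_P, C_P] − B‖_F² : B of size |R_P|×|C_P| with rank(B) ≤ |P| } + Σ_{(i,j) : (L·R)[i,j] = 0} |A[i,j]|², and this infimum is attained. -/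
/-- The rank-one contribution support `U_k = L[:,k] ⬝ R[k,:]` of binary matrices `(L, R)`. -/
def contrib {m r n : ℕ} (L : Matrix (Fin m) (Fin r) ℕ) (R : Matrix (Fin r) (Fin n) ℕ)
    (k : Fin r) : Matrix (Fin m) (Fin n) ℕ :=
  Matrix.of fun i j => L i k * R k j

open scoped Classical in
/-- The equivalence classes `P(L,R)` of the relation `k ∼ k' ↔ U_k = U_k'` on `Fin r`. -/
noncomputable def classes {m r n : ℕ} (L : Matrix (Fin m) (Fin r) ℕ)
    (R : Matrix (Fin r) (Fin n) ℕ) : Finset (Finset (Fin r)) :=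
  Finset.image (fun k => Finset.univ.filter fun k' => contrib L R k' = contrib L R k)
    Finset.univ

open scoped Classical in
/-- `R_P`: the set of indices of nonzero rows of the common rank-one support of `P`. -/
noncomputable def rowSupp {m r n : ℕ} (L : Matrix (Fin m) (Fin r) ℕ)
    (R : Matrix (Fin r) (Fin n) ℕ) (P : Finset (Fin r)) : Finset (Fin m) :=
  Finset.univ.filter fun i => ∃ k ∈ P, ∃ j, contrib L R k i j ≠ 0

open scoped Classical in
/-- `C_P`: the set of indices of nonzero columns of the common rank-one support of `P`. -/
noncomputable def colSupp {m r n : ℕ} (L : Matrix (Fin m) (Fin r) ℕ)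
    (R : Matrix (Fin r) (Fin n) ℕ) (P : Finset (Fin r)) : Finset (Fin n) :=
  Finset.univ.filter fun j => ∃ k ∈ P, ∃ i, contrib L R k i j ≠ 0

/-- Squared Frobenius norm. -/
noncomputable def frobSq {α β : Type*} [Fintype α] [Fintype β] (A : Matrix α β ℂ) : ℝ :=
  ∑ i, ∑ j, ‖A i j‖ ^ 2

/-- The submatrix `A[Rs, Cs]`. -/
def subm {m n : ℕ} (A : Matrix (Fin m) (Fin n) ℂ) (Rs : Finset (Fin m))
    (Cs : Finset (Fin n)) : Matrix Rs Cs ℂ :=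
  Matrix.of fun i j => A i.1 j.1

/-! Fixed-support factorization splits into independent problems. A product `X * Y` whose
factors are supported on `L` and `R` vanishes outside `supp (L * R)`, and when the rank-one
supports are pairwise identical or disjoint, its restriction to the block `R_P × C_P` of a class
`P` only involves the columns of `X` and rows of `Y` indexed by `P`, so it is
`X[R_P, P] * Y[P, C_P]`, of rank at most `|P|`. Since the blocks are disjoint, the error splits
into the block errors plus the energy of `A` off `supp (L * R)`; conversely, factoring a best
rank-`|P|` approximation of every block and placing the factors back gives a feasible pair,
so the bound is attained. Best low-rank approximations exist by compactness: a matrix of rank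
at most `p` factors through `p` orthonormal vectors with coefficients bounded by its norm. -/

open scoped InnerProductSpace Matrix Matrix.Norms.Frobenius

lemma frobSq_eq_norm_sq {ι κ : Type*} [Fintype ι] [Fintype κ] (A : Matrix ι κ ℂ) :
    frobSq A = ‖A‖ ^ 2 := by
  rw [Matrix.frobenius_norm_def, ← Real.sqrt_eq_rpow, Real.sq_sqrt (by positivity)]
  simp only [frobSq, Real.rpow_two]

lemma Submodule.exists_sum_inner_smul_eq {𝕜 E : Type*} [RCLike 𝕜] [NormedAddCommGroup E]
    [InnerProductSpace 𝕜 E] (W : Submodule 𝕜 E) [FiniteDimensional 𝕜 W] {ι : Type*}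
    [Fintype ι] (h : Module.finrank 𝕜 W ≤ Fintype.card ι) :
    ∃ c : ι → E, (∀ k, ‖c k‖ ≤ 1) ∧ ∀ v ∈ W, ∑ k, ⟪c k, v⟫_𝕜 • c k = v := by
  classical
  let b := stdOrthonormalBasis 𝕜 W
  let e : Fin (Module.finrank 𝕜 W) ↪ ι :=
    (Fin.castLEEmb h).trans (Fintype.equivFin ι).symm.toEmbedding
  refine ⟨Function.extend e (fun q => (b q : E)) 0, fun k => ?_, fun v hv => ?_⟩
  · by_cases hk : ∃ q, e q = k
    · obtain ⟨q, rfl⟩ := hk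
      rw [e.injective.extend_apply, Submodule.norm_coe, b.orthonormal.1 q]
    · rw [Function.extend_apply' _ _ _ hk]
      simp
  · rw [← Fintype.sum_of_injective e e.injective _ _
      (fun k hk => by rw [Function.extend_apply' _ _ _ hk, Pi.zero_apply, smul_zero])
      (fun q => by rw [e.injective.extend_apply])]
    simpa only [Submodule.coe_inner, ← Submodule.coe_smul, ← Submodule.coe_sum] using
      congrArg Subtype.val (b.sum_repr' ⟨v, hv⟩)

lemma Matrix.exists_mul_eq_of_rank_le {ι κ ι' : Type*} [Fintype ι] [Fintype κ] [Fintype ι']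
    (B : Matrix ι κ ℂ) (h : B.rank ≤ Fintype.card ι') :
    ∃ (C : Matrix ι ι' ℂ) (D : Matrix ι' κ ℂ),
      (∀ i k, ‖C i k‖ ≤ 1) ∧ (∀ k j, ‖D k j‖ ≤ ‖B‖) ∧ C * D = B := by
  classical
  let col : κ → EuclideanSpace ℂ ι := fun j => WithLp.toLp 2 (B.col j)
  have hspan : Module.finrank ℂ (Submodule.span ℂ (Set.range col)) ≤ Fintype.card ι' := by
    have : Set.range col = (WithLp.linearEquiv 2 ℂ (ι → ℂ)).symm '' Set.range B.col :=
      Set.range_comp _ _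
    rw [this, ← LinearEquiv.coe_toLinearMap, ← Submodule.map_span, LinearEquiv.finrank_map_eq,
      ← Matrix.rank_eq_finrank_span_cols]
    exact h
  obtain ⟨c, hc, hsum⟩ := (Submodule.span ℂ (Set.range col)).exists_sum_inner_smul_eq hspan
  have hcol (j : κ) : ‖col j‖ ≤ ‖B‖ := by
    rw [← Matrix.frobenius_norm_transpose]
    exact PiLp.norm_apply_le (WithLp.toLp 2 fun j => WithLp.toLp 2 (Bᵀ j)) j
  refine ⟨Matrix.of fun i k => c k i, Matrix.of fun k j => ⟪c k, col j⟫_ℂ,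
    fun i k => (PiLp.norm_apply_le (c k) i).trans (hc k), fun k j => ?_, ?_⟩
  · calc ‖⟪c k, col j⟫_ℂ‖ ≤ ‖c k‖ * ‖col j‖ := norm_inner_le_norm _ _
      _ ≤ 1 * ‖B‖ := mul_le_mul (hc k) (hcol j) (norm_nonneg _) zero_le_one
      _ = ‖B‖ := one_mul _
  · ext i j
    have := congrArg (· i) (hsum (col j) (Submodule.subset_span ⟨j, rfl⟩))
    simpa [Matrix.mul_apply, mul_comm, col] using this

lemma Matrix.isCompact_setOf_forall_norm_le {ι κ α : Type*} [SeminormedAddCommGroup α]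
    [ProperSpace α] (c : ℝ) : IsCompact {C : Matrix ι κ α | ∀ i j, ‖C i j‖ ≤ c} := by
  have h : IsCompact {C : ι → κ → α | ∀ i j, ‖C i j‖ ≤ c} := by
    simpa [Set.pi] using isCompact_univ_pi fun _ : ι =>
      isCompact_univ_pi fun _ : κ => isCompact_closedBall (0 : α) c
  exact h

lemma Matrix.exists_rank_le_forall_norm_sub_le {ι κ : Type*} [Fintype ι] [Fintype κ]
    (M : Matrix ι κ ℂ) (p : ℕ) :
    ∃ B : Matrix ι κ ℂ, B.rank ≤ p ∧ ∀ B' : Matrix ι κ ℂ, B'.rank ≤ p → ‖M - B‖ ≤ ‖M - B'‖ := by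
  let K : Set (Matrix ι (Fin p) ℂ × Matrix (Fin p) κ ℂ) :=
    {C | ∀ i k, ‖C i k‖ ≤ 1} ×ˢ {D | ∀ k j, ‖D k j‖ ≤ 2 * ‖M‖}
  have hT : IsCompact ((fun z => z.1 * z.2) '' K) :=
    ((isCompact_setOf_forall_norm_le 1).prod (isCompact_setOf_forall_norm_le _)).image
      (continuous_fst.matrix_mul continuous_snd)
  have h0 : (0 : Matrix ι κ ℂ) ∈ (fun z => z.1 * z.2) '' K :=
    ⟨0, ⟨by simp, by simp⟩, by simp⟩
  obtain ⟨_, ⟨⟨C, D⟩, -, rfl⟩, hmin⟩ :=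
    hT.exists_isMinOn ⟨0, h0⟩ (continuous_const.sub continuous_id).norm.continuousOn
  refine ⟨C * D, (rank_mul_le_right _ _).trans (rank_le_card_height _ |>.trans_eq
    (Fintype.card_fin p)), fun B' hB' => ?_⟩
  -- a matrix of norm more than `2 * ‖M‖` is farther from `M` than `0` is
  by_cases hbig : 2 * ‖M‖ < ‖B'‖
  · calc ‖M - C * D‖ ≤ ‖M - 0‖ := hmin h0
      _ ≤ ‖M - B'‖ := by
        rw [sub_zero, norm_sub_rev]
        linarith [norm_sub_norm_le B' M]
  · obtain ⟨C', D', hC', hD', rfl⟩ :=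
      B'.exists_mul_eq_of_rank_le (hB'.trans_eq (Fintype.card_fin p).symm)
    exact hmin ⟨(C', D'), ⟨hC', fun k j => (hD' k j).trans (not_lt.1 hbig)⟩, rfl⟩

def lowRankErrors {ι κ : Type*} [Fintype ι] [Fintype κ] (M : Matrix ι κ ℂ) (p : ℕ) : Set ℝ :=
  {e | ∃ B : Matrix ι κ ℂ, B.rank ≤ p ∧ e = frobSq (M - B)}

lemma isLeast_sInf_lowRankErrors {ι κ : Type*} [Fintype ι] [Fintype κ] (M : Matrix ι κ ℂ)
    (p : ℕ) : IsLeast (lowRankErrors M p) (sInf (lowRankErrors M p)) := by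
  obtain ⟨B, hB, hmin⟩ := M.exists_rank_le_forall_norm_sub_le p
  have h : IsLeast (lowRankErrors M p) (frobSq (M - B)) := by
    refine ⟨⟨B, hB, rfl⟩, ?_⟩
    rintro _ ⟨B', hB', rfl⟩
    rw [frobSq_eq_norm_sq, frobSq_eq_norm_sq]
    exact pow_le_pow_left₀ (norm_nonneg _) (hmin B' hB') 2
  rwa [h.csInf_eq]

lemma frobSq_eq_sum_prod {α β : Type*} [Fintype α] [Fintype β] (A : Matrix α β ℂ) :
    frobSq A = ∑ x : α × β, ‖A x.1 x.2‖ ^ 2 := by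
  rw [Fintype.sum_prod_type]
  rfl

lemma frobSq_subm {m n : ℕ} (A : Matrix (Fin m) (Fin n) ℂ) (Rs : Finset (Fin m))
    (Cs : Finset (Fin n)) : frobSq (subm A Rs Cs) = ∑ x ∈ Rs ×ˢ Cs, ‖A x.1 x.2‖ ^ 2 := by
  rw [Finset.sum_product, frobSq, ← Finset.sum_coe_sort Rs]
  exact Finset.sum_congr rfl fun i _ => Finset.sum_coe_sort Cs fun j => ‖A i j‖ ^ 2

def Matrix.extendZero {α β γ : Type*} [DecidableEq α] [DecidableEq β] [Zero γ]
    {Rs : Finset α} {Cs : Finset β} (M : Matrix Rs Cs γ) : Matrix α β γ :=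
  Matrix.of fun i j => if h : i ∈ Rs ∧ j ∈ Cs then M ⟨i, h.1⟩ ⟨j, h.2⟩ else 0

lemma Matrix.extendZero_apply_of_notMem {α β γ : Type*} [DecidableEq α] [DecidableEq β]
    [Zero γ] {Rs : Finset α} {Cs : Finset β} (M : Matrix Rs Cs γ) {i : α} {j : β}
    (h : ¬(i ∈ Rs ∧ j ∈ Cs)) : M.extendZero i j = 0 :=
  dif_neg h

lemma Matrix.extendZero_apply_coe {α β γ : Type*} [DecidableEq α] [DecidableEq β] [Zero γ]
    {Rs : Finset α} {Cs : Finset β} (M : Matrix Rs Cs γ) (i : Rs) (j : Cs) :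
    M.extendZero i j = M i j :=
  dif_pos ⟨i.2, j.2⟩

section Supports

variable {m r n : ℕ}

open scoped Classical in
def contribClass (L : Matrix (Fin m) (Fin r) ℕ) (R : Matrix (Fin r) (Fin n) ℕ) (k : Fin r) :
    Finset (Fin r) :=
  Finset.univ.filter fun k' => contrib L R k' = contrib L R k

def SupportsIdenticalOrDisjoint (L : Matrix (Fin m) (Fin r) ℕ) (R : Matrix (Fin r) (Fin n) ℕ) :
    Prop :=
  ∀ k k', contrib L R k = contrib L R k' ∨ ∀ i j, contrib L R k i j = 0 ∨ contrib L R k' i j = 0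

variable {L : Matrix (Fin m) (Fin r) ℕ} {R : Matrix (Fin r) (Fin n) ℕ}

lemma mem_contribClass {k k' : Fin r} :
    k' ∈ contribClass L R k ↔ contrib L R k' = contrib L R k := by
  simp [contribClass]

lemma self_mem_contribClass (k : Fin r) : k ∈ contribClass L R k :=
  mem_contribClass.2 rfl

lemma contribClass_eq_of_mem {k k' : Fin r} (h : k' ∈ contribClass L R k) :
    contribClass L R k' = contribClass L R k := by
  ext a
  simp only [mem_contribClass, mem_contribClass.1 h]

lemma mem_classes {P : Finset (Fin r)} : P ∈ classes L R ↔ ∃ k, contribClass L R k = P := by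
  simp [classes, contribClass]

lemma contribClass_eq_of_mem_classes {P : Finset (Fin r)} (hP : P ∈ classes L R) {k : Fin r}
    (hk : k ∈ P) : contribClass L R k = P := by
  obtain ⟨k₀, rfl⟩ := mem_classes.1 hP
  exact contribClass_eq_of_mem hk

lemma mem_rowSupp_contribClass {k : Fin r} {i : Fin m} :
    i ∈ rowSupp L R (contribClass L R k) ↔ ∃ j, contrib L R k i j ≠ 0 := by
  simp only [rowSupp, Finset.mem_filter, Finset.mem_univ, true_and]
  constructor
  · rintro ⟨k', hk', hj⟩
    rwa [mem_contribClass.1 hk'] at hj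
  · exact fun hj => ⟨k, self_mem_contribClass k, hj⟩

lemma mem_colSupp_contribClass {k : Fin r} {j : Fin n} :
    j ∈ colSupp L R (contribClass L R k) ↔ ∃ i, contrib L R k i j ≠ 0 := by
  simp only [colSupp, Finset.mem_filter, Finset.mem_univ, true_and]
  constructor
  · rintro ⟨k', hk', hi⟩
    rwa [mem_contribClass.1 hk'] at hi
  · exact fun hi => ⟨k, self_mem_contribClass k, hi⟩

lemma contrib_ne_zero_iff {k : Fin r} {i : Fin m} {j : Fin n} :
    contrib L R k i j ≠ 0 ↔
      i ∈ rowSupp L R (contribClass L R k) ∧ j ∈ colSupp L R (contribClass L R k) := by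
  rw [mem_rowSupp_contribClass, mem_colSupp_contribClass]
  refine ⟨fun h => ⟨⟨j, h⟩, ⟨i, h⟩⟩, fun ⟨⟨j', hi⟩, ⟨i', hj⟩⟩ => ?_⟩
  simp only [contrib, Matrix.of_apply, ne_eq, mul_eq_zero, not_or] at hi hj ⊢
  exact ⟨hi.1, hj.2⟩

lemma mul_apply_eq_zero_iff_forall_contrib {i : Fin m} {j : Fin n} :
    (L * R) i j = 0 ↔ ∀ k, contrib L R k i j = 0 := by
  simp [Matrix.mul_apply, Finset.sum_eq_zero_iff, contrib]

variable {X : Matrix (Fin m) (Fin r) ℂ} {Y : Matrix (Fin r) (Fin n) ℂ}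

lemma mul_eq_zero_of_contrib_eq_zero (hX : ∀ i k, L i k = 0 → X i k = 0)
    (hY : ∀ k j, R k j = 0 → Y k j = 0) {i : Fin m} {k : Fin r} {j : Fin n}
    (h : contrib L R k i j = 0) : X i k * Y k j = 0 := by
  rcases mul_eq_zero.1 h with h | h
  · rw [hX i k h, zero_mul]
  · rw [hY k j h, mul_zero]

lemma mul_apply_eq_zero_of_mul_apply_eq_zero (hX : ∀ i k, L i k = 0 → X i k = 0)
    (hY : ∀ k j, R k j = 0 → Y k j = 0) {i : Fin m} {j : Fin n} (h : (L * R) i j = 0) :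
    (X * Y) i j = 0 :=
  Matrix.mul_apply (M := X) ▸ Finset.sum_eq_zero fun k _ =>
    mul_eq_zero_of_contrib_eq_zero hX hY (mul_apply_eq_zero_iff_forall_contrib.1 h k)

lemma filter_mul_apply_ne_zero_eq_biUnion :
    Finset.univ.filter (fun x : Fin m × Fin n => (L * R) x.1 x.2 ≠ 0) =
      (classes L R).biUnion fun P => rowSupp L R P ×ˢ colSupp L R P := by
  ext ⟨i, j⟩
  simp only [Finset.mem_filter, Finset.mem_univ, true_and, Finset.mem_biUnion,
    Finset.mem_product, ne_eq, mul_apply_eq_zero_iff_forall_contrib, not_forall, mem_classes]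
  constructor
  · rintro ⟨k, hk⟩
    exact ⟨_, ⟨k, rfl⟩, contrib_ne_zero_iff.1 hk⟩
  · rintro ⟨_, ⟨k, rfl⟩, hij⟩
    exact ⟨k, contrib_ne_zero_iff.2 hij⟩

namespace SupportsIdenticalOrDisjoint

lemma mem_of_contrib_ne_zero (hU : SupportsIdenticalOrDisjoint L R) {P : Finset (Fin r)}
    (hP : P ∈ classes L R) {k : Fin r} {i : Fin m} {j : Fin n} (hk : contrib L R k i j ≠ 0)
    (hi : i ∈ rowSupp L R P) (hj : j ∈ colSupp L R P) : k ∈ P := by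
  obtain ⟨k₀, rfl⟩ := mem_classes.1 hP
  rcases hU k k₀ with h | h
  · exact mem_contribClass.2 h
  · exact absurd ((h i j).resolve_left hk) (contrib_ne_zero_iff.2 ⟨hi, hj⟩)

lemma pairwiseDisjoint_blocks (hU : SupportsIdenticalOrDisjoint L R) :
    (classes L R : Set (Finset (Fin r))).PairwiseDisjoint
      fun P => rowSupp L R P ×ˢ colSupp L R P := by
  intro P hP Q hQ hne
  refine Finset.disjoint_left.2 fun {x} hxP hxQ => hne ?_
  rw [Finset.mem_product] at hxP hxQ
  obtain ⟨k, rfl⟩ := mem_classes.1 hP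
  exact contribClass_eq_of_mem_classes hQ
    (hU.mem_of_contrib_ne_zero hQ (contrib_ne_zero_iff.2 hxP) hxQ.1 hxQ.2)

lemma frobSq_sub_eq (hU : SupportsIdenticalOrDisjoint L R) (A Z : Matrix (Fin m) (Fin n) ℂ)
    (hZ : ∀ i j, (L * R) i j = 0 → Z i j = 0) :
    frobSq (A - Z) =
      (∑ P ∈ classes L R, frobSq (subm A (rowSupp L R P) (colSupp L R P) -
        subm Z (rowSupp L R P) (colSupp L R P))) +
      ∑ i, ∑ j, if (L * R) i j = 0 then ‖A i j‖ ^ 2 else 0 := by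
  have hout : (∑ i, ∑ j, if (L * R) i j = 0 then ‖A i j‖ ^ 2 else 0) =
      ∑ x ∈ Finset.univ.filter (fun x : Fin m × Fin n => ¬(L * R) x.1 x.2 ≠ 0),
        ‖(A - Z) x.1 x.2‖ ^ 2 := by
    rw [Finset.sum_filter, ← Fintype.sum_prod_type']
    refine Finset.sum_congr rfl fun x _ => ?_
    by_cases h : (L * R) x.1 x.2 = 0
    · simp [h, hZ _ _ h]
    · simp [h]
  rw [frobSq_eq_sum_prod, ← Finset.sum_filter_add_sum_filter_not _
    (fun x : Fin m × Fin n => (L * R) x.1 x.2 ≠ 0), hout, filter_mul_apply_ne_zero_eq_biUnion,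
    Finset.sum_biUnion hU.pairwiseDisjoint_blocks]
  congr 1
  exact Finset.sum_congr rfl fun P _ => (frobSq_subm (A - Z) _ _).symm

lemma subm_mul (hU : SupportsIdenticalOrDisjoint L R) (hX : ∀ i k, L i k = 0 → X i k = 0)
    (hY : ∀ k j, R k j = 0 → Y k j = 0) {P : Finset (Fin r)} (hP : P ∈ classes L R) :
    subm (X * Y) (rowSupp L R P) (colSupp L R P) =
      X.submatrix ((↑) : rowSupp L R P → Fin m) ((↑) : P → Fin r) *
        Y.submatrix ((↑) : P → Fin r) ((↑) : colSupp L R P → Fin n) := by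
  ext i j
  change ∑ k, X i k * Y k j = ∑ k : P, X i k * Y k j
  rw [Finset.sum_coe_sort P fun k => X i k * Y k j]
  refine (Finset.sum_subset (Finset.subset_univ P) fun k _ hk => ?_).symm
  exact mul_eq_zero_of_contrib_eq_zero hX hY
    (not_not.1 fun h => hk (hU.mem_of_contrib_ne_zero hP h i.2 j.2))

lemma rank_subm_mul_le (hU : SupportsIdenticalOrDisjoint L R)
    (hX : ∀ i k, L i k = 0 → X i k = 0) (hY : ∀ k j, R k j = 0 → Y k j = 0)
    {P : Finset (Fin r)} (hP : P ∈ classes L R) :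
    (subm (X * Y) (rowSupp L R P) (colSupp L R P)).rank ≤ P.card := by
  rw [hU.subm_mul hX hY hP]
  exact (Matrix.rank_mul_le_right _ _).trans
    ((Matrix.rank_le_card_height _).trans_eq (Fintype.card_coe P))

lemma exists_subm_mul_eq (hU : SupportsIdenticalOrDisjoint L R)
    (B : ∀ P : Finset (Fin r), Matrix (rowSupp L R P) (colSupp L R P) ℂ)
    (hB : ∀ P, (B P).rank ≤ P.card) :
    ∃ (X : Matrix (Fin m) (Fin r) ℂ) (Y : Matrix (Fin r) (Fin n) ℂ),
      (∀ i k, L i k = 0 → X i k = 0) ∧ (∀ k j, R k j = 0 → Y k j = 0) ∧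
      ∀ P ∈ classes L R, subm (X * Y) (rowSupp L R P) (colSupp L R P) = B P := by
  choose C D _ _ hCD using fun P =>
    (B P).exists_mul_eq_of_rank_le ((hB P).trans_eq (Fintype.card_coe P).symm)
  let X : Matrix (Fin m) (Fin r) ℂ := Matrix.of fun i k => (C (contribClass L R k)).extendZero i k
  let Y : Matrix (Fin r) (Fin n) ℂ := Matrix.of fun k j => (D (contribClass L R k)).extendZero k j
  have hX (i : Fin m) (k : Fin r) (hL : L i k = 0) : X i k = 0 := by
    refine Matrix.extendZero_apply_of_notMem _ fun h => ?_
    obtain ⟨j, hj⟩ := mem_rowSupp_contribClass.1 h.1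
    simp [contrib, hL] at hj
  have hY (k : Fin r) (j : Fin n) (hR : R k j = 0) : Y k j = 0 := by
    refine Matrix.extendZero_apply_of_notMem _ fun h => ?_
    obtain ⟨i, hi⟩ := mem_colSupp_contribClass.1 h.2
    simp [contrib, hR] at hi
  refine ⟨X, Y, hX, hY, fun P hP => ?_⟩
  have hXP : X.submatrix (↑) ((↑) : P → Fin r) = C P := by
    ext i k
    change (C (contribClass L R k)).extendZero i k = C P i k
    rw [contribClass_eq_of_mem_classes hP k.2, Matrix.extendZero_apply_coe]
  have hYP : Y.submatrix ((↑) : P → Fin r) (↑) = D P := by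
    ext k j
    change (D (contribClass L R k)).extendZero k j = D P k j
    rw [contribClass_eq_of_mem_classes hP k.2, Matrix.extendZero_apply_coe]
  rw [hU.subm_mul hX hY hP, hXP, hYP, hCD]

end SupportsIdenticalOrDisjoint

end Supports

theorem fsmf_tractable_general {m r n : ℕ} (A : Matrix (Fin m) (Fin n) ℂ)
    (L : Matrix (Fin m) (Fin r) ℕ) (R : Matrix (Fin r) (Fin n) ℕ)
    (hU : ∀ k k' : Fin r, contrib L R k = contrib L R k' ∨
      ∀ i j, contrib L R k i j = 0 ∨ contrib L R k' i j = 0) :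
    IsLeast
      { e : ℝ | ∃ (X : Matrix (Fin m) (Fin r) ℂ) (Y : Matrix (Fin r) (Fin n) ℂ),
          (∀ i k, L i k = 0 → X i k = 0) ∧ (∀ k j, R k j = 0 → Y k j = 0) ∧
          e = frobSq (A - X * Y) }
      ((∑ P ∈ classes L R,
          sInf { e : ℝ | ∃ B : Matrix (rowSupp L R P) (colSupp L R P) ℂ,
            B.rank ≤ P.card ∧ e = frobSq (subm A (rowSupp L R P) (colSupp L R P) - B) }) +
        ∑ i, ∑ j, if (L * R) i j = 0 then ‖A i j‖ ^ 2 else 0) := by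
  have hU : SupportsIdenticalOrDisjoint L R := hU
  have hbest (P : Finset (Fin r)) :=
    isLeast_sInf_lowRankErrors (subm A (rowSupp L R P) (colSupp L R P)) P.card
  refine ⟨?_, ?_⟩
  · choose B hB hBval using fun P => (hbest P).1
    obtain ⟨X, Y, hX, hY, hXY⟩ := hU.exists_subm_mul_eq B hB
    refine ⟨X, Y, hX, hY, ?_⟩
    rw [hU.frobSq_sub_eq A _ fun i j => mul_apply_eq_zero_of_mul_apply_eq_zero hX hY]
    congr 1
    exact Finset.sum_congr rfl fun P hP => by rw [hXY P hP]; exact hBval P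
  · rintro _ ⟨X, Y, hX, hY, rfl⟩
    rw [hU.frobSq_sub_eq A _ fun i j => mul_apply_eq_zero_of_mul_apply_eq_zero hX hY]
    gcongr with P hP
    exact (hbest P).2 ⟨_, hU.rank_subm_mul_le hX hY hP, rfl⟩

/-- **Theorem (tractable two-factor fixed-support matrix factorization).**
If the rank-one contribution supports of `(L, R)` are pairwise identical or disjoint,
then the squared-Frobenius approximation error of fixed-support factorization is equal to
the sum over the equivalence classes of the best low-rank approximation errors of the
corresponding blocks plus the energy of `A` outside `supp(L·R)`; moreover the infimum
is attained. -/
theorem fsmf_tractable {m r n : ℕ} (A : Matrix (Fin m) (Fin n) ℂ)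
    (L : Matrix (Fin m) (Fin r) ℕ) (R : Matrix (Fin r) (Fin n) ℕ)
    (hL : ∀ i k, L i k = 0 ∨ L i k = 1) (hR : ∀ k j, R k j = 0 ∨ R k j = 1)
    (hU : ∀ k k' : Fin r, contrib L R k = contrib L R k' ∨
      ∀ i j, contrib L R k i j = 0 ∨ contrib L R k' i j = 0) :
    IsLeast
      { e : ℝ | ∃ (X : Matrix (Fin m) (Fin r) ℂ) (Y : Matrix (Fin r) (Fin n) ℂ),
          (∀ i k, L i k = 0 → X i k = 0) ∧ (∀ k j, R k j = 0 → Y k j = 0) ∧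
          e = frobSq (A - X * Y) }
      ((∑ P ∈ classes L R,
          sInf { e : ℝ | ∃ B : Matrix (rowSupp L R P) (colSupp L R P) ℂ,
            B.rank ≤ P.card ∧ e = frobSq (subm A (rowSupp L R P) (colSupp L R P) - B) }) +
        ∑ i, ∑ j, if (L * R) i j = 0 then ‖A i j‖ ^ 2 else 0) :=
  fsmf_tractable_general A L R hU
end

section
/- Let π₁ = (a₁, b₁, c₁, d₁) and π₂ = (a₂, b₂, c₂, d₂) be any two patterns with a₁c₁d₁ = a₂b₂d₂ (no chainability is assumed). Then the rank-one contribution supports U_1, …, U_q (with q = a₁c₁d₁) of the pair of binary support matrices (S_{π₁}, S_{π₂}) are pairwise either identical or disjoint. -/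
/-- A *pattern* is a tuple `(a, b, c, d)` of (positive) natural numbers. -/
structure Pattern where
  a : ℕ
  b : ℕ
  c : ℕ
  d : ℕ

namespace Pattern

/-- The entries of a pattern are positive integers. -/
def Pos (π : Pattern) : Prop := 0 < π.a ∧ 0 < π.b ∧ 0 < π.c ∧ 0 < π.d

/-- Number of rows `a*b*d` of a `π`-factor. -/
def rows (π : Pattern) : ℕ := π.a * π.b * π.d

/-- Number of columns `a*c*d` of a `π`-factor. -/
def cols (π : Pattern) : ℕ := π.a * π.c * π.d

/-- `r(π₁, π₂) = a₁c₁/a₂ (= b₂d₂/d₁)`. -/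
def rk (π₁ π₂ : Pattern) : ℕ := π₁.a * π₁.c / π₂.a

/-- A pair of patterns is *chainable* if `a₁c₁/a₂ = b₂d₂/d₁` is a positive integer,
`a₁ ∣ a₂` and `d₂ ∣ d₁`. -/
def Chainable (π₁ π₂ : Pattern) : Prop :=
  π₂.a ∣ π₁.a * π₁.c ∧ π₁.d ∣ π₂.b * π₂.d ∧
    π₁.a * π₁.c / π₂.a = π₂.b * π₂.d / π₁.d ∧
    0 < π₁.a * π₁.c / π₂.a ∧ π₁.a ∣ π₂.a ∧ π₂.d ∣ π₁.d

/-- `π₁ * π₂ := (a₁, b₁d₁/d₂, a₂c₂/a₁, d₂)`. -/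
instance : Mul Pattern :=
  ⟨fun π₁ π₂ => ⟨π₁.a, π₁.b * π₁.d / π₂.d, π₂.a * π₂.c / π₁.a, π₂.d⟩⟩

/-- `‖π‖₀ := a*b*c*d`. -/
def norm0 (π : Pattern) : ℕ := π.a * π.b * π.c * π.d

end Pattern

open scoped Kronecker

/-- The flattening equivalence `(Fin a × Fin b) × Fin d ≃ Fin (a*b*d)`. -/
def kron3Equiv (a b d : ℕ) : (Fin a × Fin b) × Fin d ≃ Fin (a * b * d) :=
  (finProdFinEquiv.prodCongr (Equiv.refl (Fin d))).trans finProdFinEquiv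

/-- The support matrix `S_π = I_a ⊗ 1_{b×c} ⊗ I_d ∈ {0,1}^{abd × acd}`. -/
def Pattern.S (π : Pattern) : Matrix (Fin π.rows) (Fin π.cols) ℕ :=
  Matrix.reindex (kron3Equiv π.a π.b π.d) (kron3Equiv π.a π.c π.d)
    ((1 : Matrix (Fin π.a) (Fin π.a) ℕ) ⊗ₖ
      (Matrix.of fun _ _ => (1 : ℕ) : Matrix (Fin π.b) (Fin π.c) ℕ) ⊗ₖ
      (1 : Matrix (Fin π.d) (Fin π.d) ℕ))

/-- Reindexing a matrix along equalities of dimensions. -/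
def castMat {α : Type*} {m n m' n' : ℕ} (hm : m = m') (hn : n = n')
    (A : Matrix (Fin m) (Fin n) α) : Matrix (Fin m') (Fin n') α :=
  Matrix.of fun i j => A (Fin.cast hm.symm i) (Fin.cast hn.symm j)

/-!
Index the rows of `S_π` by `(α, β, δ) ∈ [a] × [b] × [d]` and its columns by `(α, γ, δ)`:
the entry is `1` exactly when the outer indices `(α, δ)` agree. Hence the columns of `S_{π₁}`,
and likewise the rows of `S_{π₂}`, are pairwise identical or disjoint, being indicators of the
fibres of a map. A rank-one contribution `U_k` is the outer product of the `k`-th column of the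
left factor and the `k`-th row of the right one, so two of them coincide if both their column
and their row factors do, and are disjoint as soon as one pair of factors is.
-/

def IdenticalOrDisjoint {ι : Type*} (u v : ι → ℕ) : Prop :=
  u = v ∨ ∀ i, u i = 0 ∨ v i = 0

lemma identicalOrDisjoint_indicator_fiber {ι κ : Type*} [DecidableEq κ] (f : ι → κ) (x y : κ) :
    IdenticalOrDisjoint (fun i => if f i = x then 1 else 0) (fun i => if f i = y then 1 else 0) := by
  by_cases hxy : x = y
  · exact Or.inl (by rw [hxy])
  · refine Or.inr fun i => ?_
    by_cases hx : f i = x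
    · exact Or.inr (if_neg (hx ▸ hxy))
    · exact Or.inl (if_neg hx)

theorem contrib_identical_or_disjoint {m r n : ℕ} (L : Matrix (Fin m) (Fin r) ℕ)
    (R : Matrix (Fin r) (Fin n) ℕ)
    (hL : ∀ k k', IdenticalOrDisjoint (fun i => L i k) (fun i => L i k'))
    (hR : ∀ k k', IdenticalOrDisjoint (R k) (R k')) (k k' : Fin r) :
    contrib L R k = contrib L R k' ∨ ∀ i j, contrib L R k i j = 0 ∨ contrib L R k' i j = 0 := by
  rcases hL k k' with hcol | hcol
  · rcases hR k k' with hrow | hrow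
    · left
      ext i j
      simp only [contrib, Matrix.of_apply, congrFun hcol i, hrow]
    · right
      intro i j
      rcases hrow j with h | h <;> simp [contrib, h]
  · right
    intro i j
    rcases hcol i with h | h <;> simp [contrib, h]

/-- The outer coordinates `(α, δ)` of the index `(α, β, δ)` flattened by `kron3Equiv a b d`. -/
def kron3Outer (a b d : ℕ) (i : Fin (a * b * d)) : Fin a × Fin d :=
  (((kron3Equiv a b d).symm i).1.1, ((kron3Equiv a b d).symm i).2)

lemma Pattern.S_apply (π : Pattern) (i : Fin π.rows) (j : Fin π.cols) :
    π.S i j = if kron3Outer π.a π.b π.d i = kron3Outer π.a π.c π.d j then 1 else 0 := by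
  unfold Pattern.S kron3Outer
  rw [Matrix.reindex_apply]
  erw [Matrix.submatrix_apply]
  obtain ⟨⟨α, β⟩, δ⟩ := (kron3Equiv π.a π.b π.d).symm i
  obtain ⟨⟨α', γ⟩, δ'⟩ := (kron3Equiv π.a π.c π.d).symm j
  simp only [Matrix.kroneckerMap_apply, Matrix.one_apply, Matrix.of_apply, Prod.mk.injEq]
  split_ifs <;> simp_all

theorem support_contribs_identical_or_disjoint_general (π₁ π₂ : Pattern)
    (hdim : π₁.cols = π₂.rows) :
    ∀ k k' : Fin π₁.cols,
      contrib π₁.S (castMat hdim.symm rfl π₂.S) k =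
        contrib π₁.S (castMat hdim.symm rfl π₂.S) k' ∨
      ∀ i j, contrib π₁.S (castMat hdim.symm rfl π₂.S) k i j = 0 ∨
        contrib π₁.S (castMat hdim.symm rfl π₂.S) k' i j = 0 := by
  have row_eq (k : Fin π₁.cols) : castMat hdim.symm rfl π₂.S k = fun j =>
      if kron3Outer π₂.a π₂.c π₂.d j = kron3Outer π₂.a π₂.b π₂.d (Fin.cast hdim k) then 1 else 0 :=
    funext fun j => by simp only [castMat, Matrix.of_apply, Pattern.S_apply, eq_comm]; rfl
  refine contrib_identical_or_disjoint _ _ (fun k k' => ?_) (fun k k' => ?_)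
  · simp only [Pattern.S_apply]
    exact identicalOrDisjoint_indicator_fiber _ _ _
  · rw [row_eq, row_eq]
    exact identicalOrDisjoint_indicator_fiber _ _ _

/-- **Lemma.** For any two patterns `π₁, π₂` with `a₁c₁d₁ = a₂b₂d₂` (no chainability assumed),
the rank-one contribution supports of `(S_{π₁}, S_{π₂})` are pairwise identical or disjoint. -/
theorem support_contribs_identical_or_disjoint (π₁ π₂ : Pattern)
    (h₁ : π₁.Pos) (h₂ : π₂.Pos) (hdim : π₁.cols = π₂.rows) :
    ∀ k k' : Fin π₁.cols,
      contrib π₁.S (castMat hdim.symm rfl π₂.S) k =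
        contrib π₁.S (castMat hdim.symm rfl π₂.S) k' ∨
      ∀ i j, contrib π₁.S (castMat hdim.symm rfl π₂.S) k i j = 0 ∨
        contrib π₁.S (castMat hdim.symm rfl π₂.S) k' i j = 0 :=
  support_contribs_identical_or_disjoint_general π₁ π₂ hdim
end

section
/- If (π₁, π₂) is a chainable pair of patterns, then, as matrices with natural-number entries, S_{π₁} · S_{π₂} = r(π₁, π₂) · S_{π₁ * π₂}. -/
open scoped Kronecker

/-! In flattened coordinates, `(i, j)` lies in the support of `S_π` iff `i / (d b) = j / (d c)`
(the same `I_a`-block) and `i ≡ j [MOD d]`. For a chainable pair, with `m = a₂ / a₁`, one has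
`c₁ = r m` and `b₂ d₂ = r d₁`. Hence a middle index `j` links row `i` of `S_{π₁}` to column `k` of
`S_{π₂}` exactly when `(i, k)` lies in the support of `S_{π₁ * π₂}`, `j` lies in the same
`I_{a₂}`-block as `k`, and `j ≡ i [MOD d₁]`. An `I_{a₂}`-block has `b₂ d₂ = r d₁` rows, so it
contains exactly `r` such `j`. -/

open Finset

namespace Nat

lemma card_filter_range_div_eq_and_mod_eq {a r d α δ : ℕ} (hα : α < a) (hδ : δ < d) :
    #{j ∈ range (a * (r * d)) | j / (r * d) = α ∧ j % d = δ} = r := by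
  have hrd {s : ℕ} (hs : s < r) : s * d + δ < r * d := by nlinarith
  refine (card_nbij' (fun j => j % (r * d) / d) (fun s => r * d * α + (s * d + δ))
    ?_ ?_ ?_ ?_).trans (card_range r)
  · intro j hj
    simp only [coe_filter, mem_range, Set.mem_ofPred_eq, coe_range, Set.mem_Iio] at hj ⊢
    have hrd_pos : 0 < r * d := Nat.pos_of_ne_zero fun h => by simp [h] at hj
    exact Nat.div_lt_of_lt_mul ((Nat.mod_lt _ hrd_pos).trans_eq (mul_comm r d))
  · intro s hs
    simp only [coe_filter, mem_range, Set.mem_ofPred_eq, coe_range, Set.mem_Iio] at hs ⊢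
    refine ⟨?_, ?_, ?_⟩
    · nlinarith [hrd hs, Nat.mul_le_mul_left (r * d) hα]
    · rw [Nat.mul_add_div (by nlinarith [hrd hs]), Nat.div_eq_of_lt (hrd hs), add_zero]
    · rw [show r * d * α + (s * d + δ) = δ + (r * α + s) * d by ring,
        Nat.add_mul_mod_self_right, Nat.mod_eq_of_lt hδ]
  · intro j hj
    simp only [coe_filter, mem_range, Set.mem_ofPred_eq] at hj
    obtain ⟨-, rfl, rfl⟩ := hj
    have hq := Nat.div_add_mod j (r * d)
    have ht := Nat.div_add_mod' (j % (r * d)) d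
    rw [Nat.mod_mul_left_mod] at ht
    dsimp only
    linarith
  · intro s hs
    simp only [coe_range, Set.mem_Iio] at hs
    dsimp only
    rw [Nat.mul_add_mod, Nat.mod_eq_of_lt (hrd hs), mul_comm, Nat.mul_add_div (by omega),
      Nat.div_eq_of_lt hδ, add_zero]

end Nat

namespace Pattern

def InSupport (π : Pattern) (i j : ℕ) : Prop :=
  i / (π.d * π.b) = j / (π.d * π.c) ∧ i % π.d = j % π.d

instance (π : Pattern) (i j : ℕ) : Decidable (π.InSupport i j) :=
  inferInstanceAs (Decidable (_ ∧ _))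

lemma S_apply_s2 (π : Pattern) (i : Fin π.rows) (j : Fin π.cols) :
    π.S i j = if π.InSupport i j then 1 else 0 := by
  change Fin (π.a * π.b * π.d) at i; change Fin (π.a * π.c * π.d) at j
  simp only [S, Matrix.reindex_apply, Matrix.submatrix_apply, kron3Equiv,
    Equiv.symm_trans_apply, Equiv.prodCongr_symm, Equiv.prodCongr_apply, Equiv.refl_symm,
    Equiv.coe_refl, Prod.map, finProdFinEquiv_symm_apply, Matrix.kroneckerMap_apply,
    Matrix.of_apply, Matrix.one_apply, id]
  simp only [InSupport, Fin.ext_iff, Fin.coe_divNat, Fin.coe_modNat, Nat.div_div_eq_div_mul]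
  split_ifs <;> simp_all

lemma mul_d_mul_b {π₁ π₂ : Pattern} (h : π₂.d ∣ π₁.d) :
    (π₁ * π₂).d * (π₁ * π₂).b = π₁.d * π₁.b := by
  change π₂.d * (π₁.b * π₁.d / π₂.d) = π₁.d * π₁.b
  rw [Nat.mul_div_cancel' (h.mul_left π₁.b), mul_comm]

lemma mul_d_mul_c {π₁ π₂ : Pattern} (h : π₁.a ∣ π₂.a) :
    (π₁ * π₂).d * (π₁ * π₂).c = π₂.d * π₂.c * (π₂.a / π₁.a) := by
  change π₂.d * (π₂.a * π₂.c / π₁.a) = π₂.d * π₂.c * (π₂.a / π₁.a)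
  rw [Nat.mul_div_right_comm h]
  ring

namespace Chainable

variable {π₁ π₂ : Pattern}

lemma a_dvd (h : Chainable π₁ π₂) : π₁.a ∣ π₂.a := h.2.2.2.2.1

lemma d_dvd (h : Chainable π₁ π₂) : π₂.d ∣ π₁.d := h.2.2.2.2.2

lemma a_pos (h : Chainable π₁ π₂) : 0 < π₁.a :=
  Nat.pos_of_ne_zero fun h₀ => by simpa [h₀] using h.2.2.2.1

lemma d_pos (h : Chainable π₁ π₂) : 0 < π₁.d :=
  Nat.pos_of_ne_zero fun h₀ => by simpa [h₀, h.2.2.1] using h.2.2.2.1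

lemma d_mul_b_eq (h : Chainable π₁ π₂) : π₂.d * π₂.b = rk π₁ π₂ * π₁.d := by
  rw [rk, h.2.2.1, Nat.div_mul_cancel h.2.1, mul_comm]

lemma c_eq (h : Chainable π₁ π₂) : π₁.c = rk π₁ π₂ * (π₂.a / π₁.a) := by
  refine Nat.eq_of_mul_eq_mul_left h.a_pos ?_
  rw [mul_left_comm, Nat.mul_div_cancel' h.a_dvd, rk, Nat.div_mul_cancel h.1]

lemma cols_eq (h : Chainable π₁ π₂) : π₁.cols = π₂.a * (rk π₁ π₂ * π₁.d) := by
  rw [cols, h.c_eq]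
  conv_rhs => rw [← Nat.mul_div_cancel' h.a_dvd]
  ring

lemma inSupport_and_inSupport_iff (h : Chainable π₁ π₂) {i j k : ℕ} :
    π₁.InSupport i j ∧ π₂.InSupport j k ↔
      (j / (rk π₁ π₂ * π₁.d) = k / (π₂.d * π₂.c) ∧ j % π₁.d = i % π₁.d) ∧
        (π₁ * π₂).InSupport i k := by
  have hmod : i % π₁.d = j % π₁.d → i % π₂.d = j % π₂.d := fun hij => by
    rw [← Nat.mod_mod_of_dvd i h.d_dvd, hij, Nat.mod_mod_of_dvd j h.d_dvd]
  have hc : π₁.d * π₁.c = rk π₁ π₂ * π₁.d * (π₂.a / π₁.a) := by rw [h.c_eq]; ring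
  simp only [InSupport, mul_d_mul_b h.d_dvd, mul_d_mul_c h.a_dvd, hc, h.d_mul_b_eq,
    ← Nat.div_div_eq_div_mul]
  constructor
  · rintro ⟨⟨hi, hij⟩, hjk, hk⟩
    exact ⟨⟨hjk, hij.symm⟩, hi.trans (by rw [hjk]), (hmod hij).trans hk⟩
  · rintro ⟨⟨hjk, hij⟩, hi, hk⟩
    exact ⟨⟨hi.trans (by rw [hjk]), hij.symm⟩, hjk, (hmod hij.symm).symm.trans hk⟩

end Chainable

end Pattern

theorem support_mul_eq_rk_smul_general (π₁ π₂ : Pattern)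
    (hch : Pattern.Chainable π₁ π₂)
    (hdim : π₁.cols = π₂.rows)
    (hr : (π₁ * π₂).rows = π₁.rows) (hc : (π₁ * π₂).cols = π₂.cols) :
    π₁.S * castMat hdim.symm rfl π₂.S = Pattern.rk π₁ π₂ • castMat hr hc (π₁ * π₂).S := by
  ext i k
  have hk : (k : ℕ) / (π₂.d * π₂.c) < π₂.a :=
    Nat.div_lt_of_lt_mul (k.isLt.trans_eq (by rw [Pattern.cols]; ring))
  have hi : (i : ℕ) % π₁.d < π₁.d := Nat.mod_lt _ hch.d_pos
  simp only [Matrix.mul_apply, Matrix.smul_apply, smul_eq_mul, castMat, Matrix.of_apply,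
    Pattern.S_apply_s2, Fin.val_cast, ite_zero_mul_ite_zero, mul_one]
  rw [Fin.sum_univ_eq_sum_range (fun j => if π₁.InSupport i j ∧ π₂.InSupport j k then 1 else 0),
    sum_boole]
  simp only [hch.inSupport_and_inSupport_iff]
  by_cases hik : (π₁ * π₂).InSupport i k
  · simp only [hik, and_true, if_true, mul_one, hch.cols_eq]
    exact Nat.card_filter_range_div_eq_and_mod_eq hk hi
  · simp [hik]

/-- **Proposition.** For a chainable pair `(π₁, π₂)`, one has
`S_{π₁} · S_{π₂} = r(π₁, π₂) • S_{π₁ * π₂}` as matrices with natural-number entries. -/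
theorem support_mul_eq_rk_smul (π₁ π₂ : Pattern)
    (h₁ : π₁.Pos) (h₂ : π₂.Pos) (hch : Pattern.Chainable π₁ π₂)
    (hdim : π₁.cols = π₂.rows)
    (hr : (π₁ * π₂).rows = π₁.rows) (hc : (π₁ * π₂).cols = π₂.cols) :
    π₁.S * castMat hdim.symm rfl π₂.S = Pattern.rk π₁ π₂ • castMat hr hc (π₁ * π₂).S :=
  support_mul_eq_rk_smul_general π₁ π₂ hch hdim hr hc
end

section
/- Let π₁, π₂, π₃ be patterns such that (π₁, π₂) and (π₂, π₃) are chainable. Then: (1) (π₁, π₂ * π₃) and (π₁ * π₂, π₃) are chainable; (2) r(π₁, π₂ * π₃) = r(π₁, π₂) and r(π₁ * π₂, π₃) = r(π₂, π₃); (3) π₁ * (π₂ * π₃) = (π₁ * π₂) * π₃. -/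
/-! Multiplication keeps `a₁` and `d₂`, and when `d₂ ∣ d₁` and `a₁ ∣ a₂` its truncated divisions
are exact, so the products `b * d` and `a * c` survive unchanged:
`(π₁ * π₂).b * (π₁ * π₂).d = b₁ * d₁` and `(π₁ * π₂).a * (π₁ * π₂).c = a₂ * c₂`.
Chainability and `r` only see these products together with the outer entries `a` and `d`,
and both sides of the associativity law are computed from them as well. -/

namespace Pattern

variable {π₁ π₂ π₃ : Pattern}

@[ext]
theorem ext (ha : π₁.a = π₂.a) (hb : π₁.b = π₂.b) (hc : π₁.c = π₂.c) (hd : π₁.d = π₂.d) :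
    π₁ = π₂ := by
  cases π₁; cases π₂; congr

theorem Chainable.a_dvd_s4 (h : Chainable π₁ π₂) : π₁.a ∣ π₂.a := h.2.2.2.2.1

theorem Chainable.d_dvd_s4 (h : Chainable π₁ π₂) : π₂.d ∣ π₁.d := h.2.2.2.2.2

theorem mul_b_mul_mul_d (hd : π₂.d ∣ π₁.d) : (π₁ * π₂).b * (π₁ * π₂).d = π₁.b * π₁.d :=
  Nat.div_mul_cancel (hd.mul_left π₁.b)

theorem mul_a_mul_mul_c (ha : π₁.a ∣ π₂.a) : (π₁ * π₂).a * (π₁ * π₂).c = π₂.a * π₂.c :=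
  Nat.mul_div_cancel' (ha.mul_right π₂.c)

theorem Chainable.mul_right (hd : π₃.d ∣ π₂.d) (h : Chainable π₁ π₂) :
    Chainable π₁ (π₂ * π₃) := by
  obtain ⟨ha, hbd, hr, hpos, ha', hd'⟩ := h
  unfold Chainable
  rw [mul_b_mul_mul_d hd]
  exact ⟨ha, hbd, hr, hpos, ha', hd.trans hd'⟩

theorem Chainable.mul_left (ha : π₁.a ∣ π₂.a) (h : Chainable π₂ π₃) :
    Chainable (π₁ * π₂) π₃ := by
  obtain ⟨hac, hd, hr, hpos, ha', hd'⟩ := h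
  unfold Chainable
  rw [mul_a_mul_mul_c ha]
  exact ⟨hac, hd, hr, hpos, ha.trans ha', hd'⟩

theorem rk_mul_right : rk π₁ (π₂ * π₃) = rk π₁ π₂ := rfl

theorem rk_mul_left (ha : π₁.a ∣ π₂.a) : rk (π₁ * π₂) π₃ = rk π₂ π₃ :=
  congrArg (· / π₃.a) (mul_a_mul_mul_c ha)

theorem mul_assoc_of_dvd (hd : π₂.d ∣ π₁.d) (ha : π₂.a ∣ π₃.a) :
    π₁ * (π₂ * π₃) = π₁ * π₂ * π₃ := by
  ext
  · rfl
  · exact congrArg (· / π₃.d) (mul_b_mul_mul_d hd).symm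
  · exact congrArg (· / π₁.a) (mul_a_mul_mul_c ha)
  · rfl

end Pattern

theorem pattern_mul_assoc_general (π₁ π₂ π₃ : Pattern)
    (h₁₂ : Pattern.Chainable π₁ π₂) (h₂₃ : Pattern.Chainable π₂ π₃) :
    (Pattern.Chainable π₁ (π₂ * π₃) ∧ Pattern.Chainable (π₁ * π₂) π₃) ∧
    (Pattern.rk π₁ (π₂ * π₃) = Pattern.rk π₁ π₂ ∧
      Pattern.rk (π₁ * π₂) π₃ = Pattern.rk π₂ π₃) ∧
    π₁ * (π₂ * π₃) = (π₁ * π₂) * π₃ :=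
  ⟨⟨h₁₂.mul_right h₂₃.d_dvd_s4, h₂₃.mul_left h₁₂.a_dvd_s4⟩,
    ⟨Pattern.rk_mul_right, Pattern.rk_mul_left h₁₂.a_dvd_s4⟩,
    Pattern.mul_assoc_of_dvd h₁₂.d_dvd_s4 h₂₃.a_dvd_s4⟩

/-- **Lemma (associativity of `*`).** If `(π₁, π₂)` and `(π₂, π₃)` are chainable then
`(π₁, π₂ * π₃)` and `(π₁ * π₂, π₃)` are chainable, `r(π₁, π₂*π₃) = r(π₁,π₂)`,
`r(π₁*π₂, π₃) = r(π₂,π₃)` and `π₁ * (π₂ * π₃) = (π₁ * π₂) * π₃`. -/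
theorem pattern_mul_assoc (π₁ π₂ π₃ : Pattern)
    (h₁ : π₁.Pos) (h₂ : π₂.Pos) (h₃ : π₃.Pos)
    (h₁₂ : Pattern.Chainable π₁ π₂) (h₂₃ : Pattern.Chainable π₂ π₃) :
    (Pattern.Chainable π₁ (π₂ * π₃) ∧ Pattern.Chainable (π₁ * π₂) π₃) ∧
    (Pattern.rk π₁ (π₂ * π₃) = Pattern.rk π₁ π₂ ∧
      Pattern.rk (π₁ * π₂) π₃ = Pattern.rk π₂ π₃) ∧
    π₁ * (π₂ * π₃) = (π₁ * π₂) * π₃ :=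
  pattern_mul_assoc_general π₁ π₂ π₃ h₁₂ h₂₃
end

section
/- Let β = (π_ℓ)_{ℓ=1}^L be a chainable and non-redundant architecture. Then for all integers 1 ≤ q ≤ s < t ≤ L, the pair of patterns (π_q * ⋯ * π_s, π_{s+1} * ⋯ * π_t) is chainable and non-redundant. -/
/-- Partial products of patterns: `pprod π q k = π q * π (q+1) * ⋯ * π (q+k)`. -/
def pprod (π : ℕ → Pattern) (q : ℕ) : ℕ → Pattern
  | 0 => π q
  | k + 1 => pprod π q k * π (q + k + 1)

/-- A chainable pair is *redundant* if `r(π₁,π₂) ≥ min (b₁, c₂)`. -/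
def RedundantPair (π₁ π₂ : Pattern) : Prop := min π₁.b π₂.c ≤ Pattern.rk π₁ π₂

theorem Nat.rel_of_forall_rel_succ_of_le_of_lt_bound {β : Type*} (r : β → β → Prop) [Std.Refl r]
    [IsTrans β r] {f : ℕ → β} {L : ℕ} (h : ∀ n, n + 1 < L → r (f n) (f (n + 1)))
    ⦃i j : ℕ⦄ (hij : i ≤ j) (hjL : j < L) : r (f i) (f j) := by
  induction hij with
  | refl => exact refl _
  | step _ ih => exact _root_.trans (ih (by omega)) (h _ hjL)

namespace Pattern

variable {x y x' y' : Pattern}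

theorem mul_a_mul_c (h : x.a ∣ y.a * y.c) : (x * y).a * (x * y).c = y.a * y.c :=
  Nat.mul_div_cancel' h

theorem mul_b_mul_d (h : y.d ∣ x.b * x.d) : (x * y).b * (x * y).d = x.b * x.d :=
  Nat.div_mul_cancel h

namespace Chainable

theorem a_dvd_s7 (h : Chainable x y) : x.a ∣ y.a := h.2.2.2.2.1

theorem d_dvd_s7 (h : Chainable x y) : y.d ∣ x.d := h.2.2.2.2.2

theorem rk_pos (h : Chainable x y) : 0 < rk x y := h.2.2.2.1

theorem rk_mul_a (h : Chainable x y) : rk x y * y.a = x.a * x.c := Nat.div_mul_cancel h.1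

theorem rk_mul_d (h : Chainable x y) : rk x y * x.d = y.b * y.d := by
  rw [rk, h.2.2.1, Nat.div_mul_cancel h.2.1]

theorem right_a_pos (h : Chainable x y) : 0 < y.a := by
  have hrk := h.rk_pos
  rw [rk] at hrk
  exact Nat.pos_of_ne_zero fun h0 => by simp [h0] at hrk

theorem left_d_pos (h : Chainable x y) : 0 < x.d := by
  have hrk := h.rk_pos
  rw [rk, h.2.2.1] at hrk
  exact Nat.pos_of_ne_zero fun h0 => by simp [h0] at hrk

theorem b_mul_d_le (h : Chainable x y) (hnr : ¬ RedundantPair x y) : y.b * y.d ≤ x.b * x.d := by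
  have hrk : rk x y < x.b := (not_le.mp hnr).trans_le (min_le_left _ _)
  rw [← h.rk_mul_d]
  exact Nat.mul_le_mul_right _ hrk.le

theorem a_mul_c_le (h : Chainable x y) (hnr : ¬ RedundantPair x y) : x.a * x.c ≤ y.a * y.c := by
  have hrk : rk x y < y.c := (not_le.mp hnr).trans_le (min_le_right _ _)
  rw [← h.rk_mul_a, mul_comm y.a]
  exact Nat.mul_le_mul_right _ hrk.le

theorem congr (h : Chainable x y) (hac : x'.a * x'.c = x.a * x.c) (hd : x'.d = x.d)
    (ha : y'.a = y.a) (hbd : y'.b * y'.d = y.b * y.d) (hadvd : x'.a ∣ y'.a)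
    (hddvd : y'.d ∣ x'.d) : Chainable x' y' ∧ rk x' y' = rk x y := by
  refine ⟨⟨?_, ?_, ?_, ?_, hadvd, hddvd⟩, by rw [rk, rk, hac, ha]⟩
  · rw [hac, ha]; exact h.1
  · rw [hd, hbd]; exact h.2.1
  · rw [hac, ha, hbd, hd]; exact h.2.2.1
  · rw [hac, ha]; exact h.rk_pos

end Chainable

theorem not_redundantPair_of_le (hnr : ¬ RedundantPair x y) (hrk : rk x' y' = rk x y)
    (hb : x.b ≤ x'.b) (hc : y.c ≤ y'.c) : ¬ RedundantPair x' y' := by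
  rw [RedundantPair, hrk, not_le] at *
  exact hnr.trans_le (min_le_min hb hc)

end Pattern

open Pattern

section chain

variable {L : ℕ} {π : ℕ → Pattern} {i j : ℕ}

theorem chain_a_dvd_of_le (hch : ∀ ℓ, ℓ + 1 < L → Chainable (π ℓ) (π (ℓ + 1)))
    (hij : i ≤ j) (hj : j < L) : (π i).a ∣ (π j).a :=
  Nat.rel_of_forall_rel_succ_of_le_of_lt_bound (· ∣ ·) (fun ℓ hℓ => (hch ℓ hℓ).a_dvd_s7) hij hj

theorem chain_d_dvd_of_le (hch : ∀ ℓ, ℓ + 1 < L → Chainable (π ℓ) (π (ℓ + 1)))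
    (hij : i ≤ j) (hj : j < L) : (π j).d ∣ (π i).d :=
  Nat.rel_of_forall_rel_succ_of_le_of_lt_bound (f := fun ℓ => (π ℓ).d) (fun m n => n ∣ m)
    (fun ℓ hℓ => (hch ℓ hℓ).d_dvd_s7) hij hj

theorem chain_a_mul_c_le_of_le (hch : ∀ ℓ, ℓ + 1 < L → Chainable (π ℓ) (π (ℓ + 1)))
    (hnr : ∀ ℓ, ℓ + 1 < L → ¬ RedundantPair (π ℓ) (π (ℓ + 1))) (hij : i ≤ j) (hj : j < L) :
    (π i).a * (π i).c ≤ (π j).a * (π j).c :=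
  Nat.rel_of_forall_rel_succ_of_le_of_lt_bound (f := fun ℓ => (π ℓ).a * (π ℓ).c) (· ≤ ·)
    (fun ℓ hℓ => (hch ℓ hℓ).a_mul_c_le (hnr ℓ hℓ)) hij hj

theorem chain_b_mul_d_le_of_le (hch : ∀ ℓ, ℓ + 1 < L → Chainable (π ℓ) (π (ℓ + 1)))
    (hnr : ∀ ℓ, ℓ + 1 < L → ¬ RedundantPair (π ℓ) (π (ℓ + 1))) (hij : i ≤ j) (hj : j < L) :
    (π j).b * (π j).d ≤ (π i).b * (π i).d :=
  Nat.rel_of_forall_rel_succ_of_le_of_lt_bound (f := fun ℓ => (π ℓ).b * (π ℓ).d) (· ≥ ·)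
    (fun ℓ hℓ => (hch ℓ hℓ).b_mul_d_le (hnr ℓ hℓ)) hij hj

end chain

section pprod

variable {L : ℕ} (π : ℕ → Pattern) (q : ℕ) {k : ℕ}

theorem pprod_a : ∀ k, (pprod π q k).a = (π q).a
  | 0 => rfl
  | k + 1 => pprod_a k

theorem pprod_d (k : ℕ) : (pprod π q k).d = (π (q + k)).d := by
  cases k <;> rfl

variable {π q}

theorem pprod_a_mul_c (hch : ∀ ℓ, ℓ + 1 < L → Chainable (π ℓ) (π (ℓ + 1))) (hk : q + k < L) :
    (pprod π q k).a * (pprod π q k).c = (π (q + k)).a * (π (q + k)).c := by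
  cases k with
  | zero => rfl
  | succ k =>
    have hdvd : (pprod π q k).a ∣ (π (q + k + 1)).a * (π (q + k + 1)).c := by
      rw [pprod_a]
      exact (chain_a_dvd_of_le hch (by omega) hk).mul_right _
    rw [pprod, mul_a_mul_c hdvd]
    rfl

theorem pprod_b_mul_d (hch : ∀ ℓ, ℓ + 1 < L → Chainable (π ℓ) (π (ℓ + 1))) (hk : q + k < L) :
    (pprod π q k).b * (pprod π q k).d = (π q).b * (π q).d := by
  induction k with
  | zero => rfl
  | succ k ih =>
    have ih := ih (by omega)
    have hdvd : (π (q + k + 1)).d ∣ (pprod π q k).b * (pprod π q k).d := by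
      rw [ih]
      exact (chain_d_dvd_of_le hch (by omega) hk).mul_left _
    rw [pprod, mul_b_mul_d hdvd, ih]

theorem le_pprod_b (hch : ∀ ℓ, ℓ + 1 < L → Chainable (π ℓ) (π (ℓ + 1)))
    (hnr : ∀ ℓ, ℓ + 1 < L → ¬ RedundantPair (π ℓ) (π (ℓ + 1))) (hk : q + k < L)
    (hd : 0 < (π (q + k)).d) : (π (q + k)).b ≤ (pprod π q k).b := by
  refine Nat.le_of_mul_le_mul_right ?_ hd
  calc (π (q + k)).b * (π (q + k)).d ≤ (π q).b * (π q).d :=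
        chain_b_mul_d_le_of_le hch hnr (by omega) hk
    _ = (pprod π q k).b * (π (q + k)).d := by rw [← pprod_b_mul_d hch hk, pprod_d]

theorem le_pprod_c (hch : ∀ ℓ, ℓ + 1 < L → Chainable (π ℓ) (π (ℓ + 1)))
    (hnr : ∀ ℓ, ℓ + 1 < L → ¬ RedundantPair (π ℓ) (π (ℓ + 1))) (hk : q + k < L)
    (ha : 0 < (π q).a) : (π q).c ≤ (pprod π q k).c := by
  refine Nat.le_of_mul_le_mul_left ?_ ha
  calc (π q).a * (π q).c ≤ (π (q + k)).a * (π (q + k)).c :=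
        chain_a_mul_c_le_of_le hch hnr (by omega) hk
    _ = (π q).a * (pprod π q k).c := by rw [← pprod_a_mul_c hch hk, pprod_a]

end pprod

theorem partial_products_nonredundant_general (L : ℕ) (π : ℕ → Pattern)
    (hch : ∀ ℓ, ℓ + 1 < L → Pattern.Chainable (π ℓ) (π (ℓ + 1)))
    (hnr : ∀ ℓ, ℓ + 1 < L → ¬ RedundantPair (π ℓ) (π (ℓ + 1))) :
    ∀ q s t : ℕ, q ≤ s → s < t → t < L →
      Pattern.Chainable (pprod π q (s - q)) (pprod π (s + 1) (t - (s + 1))) ∧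
      ¬ RedundantPair (pprod π q (s - q)) (pprod π (s + 1) (t - (s + 1))) := by
  intro q s t hqs hst htL
  obtain ⟨k, rfl⟩ := Nat.exists_eq_add_of_le hqs
  obtain ⟨m, rfl⟩ := Nat.exists_eq_add_of_le hst
  simp only [Nat.add_sub_cancel_left]
  have hsL : q + k + 1 < L := by omega
  have hs := hch _ hsL
  obtain ⟨hchain, hrk⟩ := hs.congr (pprod_a_mul_c hch (by omega)) (pprod_d π q k)
    (pprod_a π _ m) (pprod_b_mul_d hch htL)
    (by rw [pprod_a, pprod_a]; exact chain_a_dvd_of_le hch (by omega) hsL)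
    (by rw [pprod_d, pprod_d]; exact chain_d_dvd_of_le hch (by omega) htL)
  exact ⟨hchain, not_redundantPair_of_le (hnr _ hsL) hrk
    (le_pprod_b hch hnr (by omega) hs.left_d_pos) (le_pprod_c hch hnr htL hs.right_a_pos)⟩

/-- **Lemma.** If `β = (π 0, …, π (L-1))` is chainable and non-redundant then, for all
`0 ≤ q ≤ s < t ≤ L-1`, the pair `(π q * ⋯ * π s, π (s+1) * ⋯ * π t)` is chainable and
non-redundant. -/
theorem partial_products_nonredundant (L : ℕ) (π : ℕ → Pattern)
    (hPos : ∀ ℓ < L, (π ℓ).Pos)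
    (hch : ∀ ℓ, ℓ + 1 < L → Pattern.Chainable (π ℓ) (π (ℓ + 1)))
    (hnr : ∀ ℓ, ℓ + 1 < L → ¬ RedundantPair (π ℓ) (π (ℓ + 1))) :
    ∀ q s t : ℕ, q ≤ s → s < t → t < L →
      Pattern.Chainable (pprod π q (s - q)) (pprod π (s + 1) (t - (s + 1))) ∧
      ¬ RedundantPair (pprod π q (s - q)) (pprod π (s + 1) (t - (s + 1))) :=
  partial_products_nonredundant_general L π hch hnr
end

section
/- Let (π₁, π₂) be a chainable pair of patterns with πᵢ = (aᵢ, bᵢ, cᵢ, dᵢ) that is redundant, i.e., r(π₁, π₂) ≥ min(b₁, c₂). Then: (1) B^{(π₁,π₂)} = D^{π₁*π₂}, i.e., every matrix whose support is contained in that of S_{π₁*π₂} can be written as X₁X₂ with X₁ ∈ D^{π₁}, X₂ ∈ D^{π₂}; (2) ‖π₁ * π₂‖₀ = b₁d₁a₂c₂ < a₁b₁c₁d₁ + a₂b₂c₂d₂ = ‖π₁‖₀ + ‖π₂‖₀. -/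
open scoped Kronecker

/-- `X` is a `π`-factor: its support is contained in that of `S_π`. -/
def IsFactor (π : Pattern) (X : Matrix (Fin π.rows) (Fin π.cols) ℂ) : Prop :=
  ∀ i j, π.S i j = 0 → X i j = 0

/-!
Write `a₂ = a₁ s`, `d₁ = t d₂` and `r = r(π₁, π₂)`, so that `c₁ = s r` and `b₂ = t r`. Read in
mixed radix, a middle index `k` (a column of a `π₁`-factor and a row of a `π₂`-factor) has digits
`(α₁, σ, ρ, τ, δ₂)` with radices `(a₁, s, r, t, d₂)`. If row `i` and column `j` are linked by
`π₁ * π₂`, the middle indices linked to both are exactly those whose digits other than `ρ` are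
dictated by `i` and `j`; prescribing `ρ` as well singles out one of them.

If `c₂ ≤ r`, prescribe `ρ` to be the `γ`-digit of `j`: then `X₂` is the 0/1 incidence matrix of
this choice and `X₁` copies the entries of `A`. If `b₁ ≤ r`, prescribe `ρ` to be the `β`-digit of
`i` and exchange the roles of the factors. The count of nonzeros is `a₂ d₁ · b₁ c₂`, against
`a₂ d₁ · r (b₁ + c₂)` for the two factors, and `b₁ c₂ < r (b₁ + c₂)` as `r ≥ min b₁ c₂`.
-/

theorem Nat.div_div_eq_div_div {m n m' n' : ℕ} (h : m * n = m' * n') (x : ℕ) :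
    x / m / n = x / m' / n' := by
  rw [Nat.div_div_eq_div_mul, Nat.div_div_eq_div_mul, h]

theorem Nat.eq_add_mul_add_mul_iff {m n k x y z : ℕ} (hz : z < m) (hy : y < n) :
    k = z + m * (y + n * x) ↔ k % m = z ∧ k / m % n = y ∧ k / m / n = x := by
  have outer := Nat.div_mod_unique (b := m) (a := k) (d := y + n * x) (c := z) (by omega)
  have inner := Nat.div_mod_unique (b := n) (a := k / m) (d := x) (c := y) (by omega)
  constructor
  · intro hk
    obtain ⟨hq, hr⟩ := outer.2 ⟨hk.symm, hz⟩
    obtain ⟨hx, hy⟩ := inner.2 ⟨hq.symm, hy⟩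
    exact ⟨hr, hy, hx⟩
  · rintro ⟨hr, hy', hx⟩
    exact (outer.1 ⟨(inner.1 ⟨hx, hy'⟩).1.symm, hr⟩).1.symm

theorem Nat.mul_lt_mul_add_of_min_le {b c r : ℕ} (hb : 0 < b) (hc : 0 < c) (h : min b c ≤ r) :
    b * c < r * (b + c) := by
  rcases le_total b c with hbc | hcb
  · rw [min_eq_left hbc] at h
    nlinarith
  · rw [min_eq_right hcb] at h
    nlinarith

namespace Matrix

variable {m l n α : Type*} [Fintype l]

/-- `X` puts `A i j` at the unique middle index `k` with `R i k ∧ P k j`; `Y` is the 0/1 matrix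
of `P`. -/
theorem exists_mul_eq_of_existsUnique [NonAssocSemiring α] (A : Matrix m n α)
    (R : m → l → Prop) (P : l → n → Prop) (hP : ∀ k j j', P k j → P k j' → j = j')
    (hA : ∀ i j, A i j ≠ 0 → ∃! k, R i k ∧ P k j) :
    ∃ (X : Matrix m l α) (Y : Matrix l n α),
      (∀ i k, X i k ≠ 0 → R i k) ∧ (∀ k j, Y k j ≠ 0 → P k j) ∧ A = X * Y := by
  classical
  refine ⟨of fun i k => if h : R i k ∧ ∃ j, P k j then A i h.2.choose else 0,
    of fun k j => if P k j then 1 else 0,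
    fun i k hX => by_contra fun hik => hX (dif_neg fun h => hik h.1),
    fun k j hY => by_contra fun hkj => hY (if_neg hkj), ?_⟩
  ext i j
  have hterm : ∀ k, (if h : R i k ∧ ∃ j, P k j then A i h.2.choose else 0) *
      (if P k j then 1 else 0) = if R i k ∧ P k j then A i j else 0 := by
    intro k
    by_cases hk : R i k ∧ P k j
    · rw [dif_pos ⟨hk.1, j, hk.2⟩, if_pos hk.2, if_pos hk, mul_one,
        hP k _ _ (Exists.choose_spec _) hk.2]
    · rw [if_neg hk]
      by_cases hR : R i k
      · rw [if_neg fun h => hk ⟨hR, h⟩, mul_zero]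
      · rw [dif_neg fun h => hR h.1, zero_mul]
  simp only [mul_apply, of_apply, hterm]
  by_cases hij : A i j = 0
  · simp [hij]
  obtain ⟨k₀, hk₀, huniq⟩ := hA i j hij
  have hiff : ∀ k, R i k ∧ P k j ↔ k = k₀ := fun k => ⟨huniq k, fun h => h ▸ hk₀⟩
  simp only [hiff, Finset.sum_ite_eq', Finset.mem_univ, if_true]

theorem exists_mul_eq_of_existsUnique' [CommSemiring α] (A : Matrix m n α)
    (R : m → l → Prop) (P : l → n → Prop) (hR : ∀ i i' k, R i k → R i' k → i = i')
    (hA : ∀ i j, A i j ≠ 0 → ∃! k, R i k ∧ P k j) :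
    ∃ (X : Matrix m l α) (Y : Matrix l n α),
      (∀ i k, X i k ≠ 0 → R i k) ∧ (∀ k j, Y k j ≠ 0 → P k j) ∧ A = X * Y := by
  obtain ⟨Y, X, hY, hX, h⟩ := Aᵀ.exists_mul_eq_of_existsUnique (fun j k => P k j)
    (fun k i => R i k) (fun k i i' => hR i i' k) fun j i hij => by
      simpa only [and_comm] using hA i j hij
  exact ⟨Xᵀ, Yᵀ, fun i k => hX k i, fun k j => hY j k, by
    rw [← transpose_mul, ← h, transpose_transpose]⟩

end Matrix

namespace Pattern

/-- Row `i = δ + d (β + b α)` and column `j = δ' + d (γ + c α')` (the digit order of `kron3Equiv`)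
meet in the support of `S_π` iff `α = α'` and `δ = δ'`. -/
def Linked (π : Pattern) (i j : ℕ) : Prop := i / π.d / π.b = j / π.d / π.c ∧ i % π.d = j % π.d

theorem S_eq_zero_iff (π : Pattern) (i : Fin π.rows) (j : Fin π.cols) :
    π.S i j = 0 ↔ ¬π.Linked i j := by
  revert i j
  simp only [rows, cols]
  intro i j
  simp only [S, kron3Equiv, Matrix.reindex_apply, Matrix.submatrix_apply, Equiv.symm_trans_apply,
    finProdFinEquiv_symm_apply, Equiv.prodCongr_symm, Equiv.prodCongr_apply, Prod.map,
    Matrix.kroneckerMap_apply, Matrix.one_apply, Matrix.of_apply, Linked, Fin.ext_iff,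
    Fin.coe_divNat, Fin.coe_modNat, Equiv.refl_symm, Equiv.refl_apply]
  split_ifs <;> simp_all

theorem castMat_S_eq_zero_iff (π : Pattern) {m n : ℕ} (hm : π.rows = m) (hn : π.cols = n)
    (i : Fin m) (j : Fin n) : castMat hm hn π.S i j = 0 ↔ ¬π.Linked i j :=
  π.S_eq_zero_iff _ _

theorem isFactor_iff (π : Pattern) (X : Matrix (Fin π.rows) (Fin π.cols) ℂ) :
    IsFactor π X ↔ ∀ i j, X i j ≠ 0 → π.Linked i j := by
  simp only [IsFactor, S_eq_zero_iff, not_imp_comm]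

theorem Chainable.exists_eq_mul {π₁ π₂ : Pattern} (h : Chainable π₁ π₂) (ha : 0 < π₁.a)
    (hd : 0 < π₂.d) : ∃ s t, π₂.a = π₁.a * s ∧ π₁.d = t * π₂.d ∧
      π₁.c = s * rk π₁ π₂ ∧ π₂.b = t * rk π₁ π₂ := by
  obtain ⟨hac, hbd, hrk, -, ⟨s, hs⟩, ⟨t, ht⟩⟩ := h
  refine ⟨s, t, hs, ht.trans (mul_comm _ _), Nat.eq_of_mul_eq_mul_left ha ?_,
    Nat.eq_of_mul_eq_mul_left hd ?_⟩
  · calc π₁.a * π₁.c = rk π₁ π₂ * π₂.a := (Nat.div_mul_cancel hac).symm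
      _ = π₁.a * (s * rk π₁ π₂) := by rw [hs]; ring
  · calc π₂.d * π₂.b = rk π₁ π₂ * π₁.d := by rw [rk, hrk, Nat.div_mul_cancel hbd, mul_comm]
      _ = π₂.d * (t * rk π₁ π₂) := by rw [ht]; ring

def HasLinkedFactorization (π₁ π₂ : Pattern) (A : Matrix (Fin π₁.rows) (Fin π₂.cols) ℂ) : Prop :=
  ∃ (X : Matrix (Fin π₁.rows) (Fin π₁.cols) ℂ) (Y : Matrix (Fin π₁.cols) (Fin π₂.cols) ℂ),
    (∀ i k, X i k ≠ 0 → π₁.Linked i k) ∧ (∀ k j, Y k j ≠ 0 → π₂.Linked k j) ∧ A = X * Y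

variable {a b c d r s t : ℕ}

theorem mk_mul_mk (ha : 0 < a) (hd : 0 < d) :
    (⟨a, b, s * r, t * d⟩ * ⟨a * s, t * r, c, d⟩ : Pattern) = ⟨a, b * t, s * c, d⟩ := by
  change (⟨a, b * (t * d) / d, a * s * c / a, d⟩ : Pattern) = _
  rw [show b * (t * d) = d * (b * t) by ring, show a * s * c = a * (s * c) by ring,
    Nat.mul_div_cancel_left _ hd, Nat.mul_div_cancel_left _ ha]

theorem norm0_mk_lt (has : 0 < a * s) (htd : 0 < t * d) (hb : 0 < b) (hc : 0 < c)
    (hred : min b c ≤ r) :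
    norm0 ⟨a, b * t, s * c, d⟩ < norm0 ⟨a, b, s * r, t * d⟩ + norm0 ⟨a * s, t * r, c, d⟩ := by
  simp only [norm0]
  calc a * (b * t) * (s * c) * d = a * s * (t * d) * (b * c) := by ring
    _ < a * s * (t * d) * (r * (b + c)) :=
      Nat.mul_lt_mul_of_pos_left (Nat.mul_lt_mul_add_of_min_le hb hc hred) (Nat.mul_pos has htd)
    _ = a * b * (s * r) * (t * d) + a * s * (t * r) * c * d := by ring

variable {i j k : ℕ}

theorem linked_mk_mul_mk (h₁ : Linked ⟨a, b, s * r, t * d⟩ i k)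
    (h₂ : Linked ⟨a * s, t * r, c, d⟩ k j) : Linked ⟨a, b * t, s * c, d⟩ i j := by
  obtain ⟨h₁q, h₁m⟩ := h₁
  obtain ⟨h₂q, h₂m⟩ := h₂
  dsimp only at h₁q h₁m h₂q h₂m
  refine ⟨?_, ?_⟩
  · calc i / d / (b * t) = i / (t * d) / b := Nat.div_div_eq_div_div (by ring) i
      _ = k / (t * d) / (s * r) := h₁q
      _ = k / d / (t * r) / s := by
        rw [Nat.div_div_eq_div_mul k d]; exact Nat.div_div_eq_div_div (by ring) k
      _ = j / d / (s * c) := by rw [h₂q, Nat.div_div_eq_div_mul (j / d), mul_comm c]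
  · calc i % d = k % d := by rw [← Nat.mod_mul_left_mod i t, h₁m, Nat.mod_mul_left_mod]
      _ = j % d := h₂m

theorem linked_of_mul_apply_ne_zero
    {X : Matrix (Fin (a * b * (t * d))) (Fin (a * (s * r) * (t * d))) ℂ}
    {Y : Matrix (Fin (a * (s * r) * (t * d))) (Fin (a * s * c * d)) ℂ}
    (hX : ∀ i k, X i k ≠ 0 → Linked ⟨a, b, s * r, t * d⟩ i k)
    (hY : ∀ k j, Y k j ≠ 0 → Linked ⟨a * s, t * r, c, d⟩ k j) {i j}
    (h : (X * Y) i j ≠ 0) : Linked ⟨a, b * t, s * c, d⟩ i j := by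
  rw [Matrix.mul_apply] at h
  obtain ⟨k, -, hk⟩ := Finset.exists_ne_zero_of_sum_ne_zero h
  exact linked_mk_mul_mk (hX i k (left_ne_zero_of_mul hk)) (hY k j (right_ne_zero_of_mul hk))

theorem linked_and_linked_iff (hij : Linked ⟨a, b * t, s * c, d⟩ i j) :
    Linked ⟨a, b, s * r, t * d⟩ i k ∧ Linked ⟨a * s, t * r, c, d⟩ k j ↔
      k % (t * d) = i % (t * d) ∧ k / (t * d) / r = j / d / c := by
  obtain ⟨hq, hm⟩ := hij
  dsimp only at hq hm
  have hk : k / d / (t * r) = k / (t * d) / r := Nat.div_div_eq_div_div (by ring) k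
  constructor
  · rintro ⟨⟨-, h₁m⟩, h₂q, -⟩
    exact ⟨h₁m.symm, hk ▸ h₂q⟩
  · rintro ⟨hkm, hkq⟩
    refine ⟨⟨?_, hkm.symm⟩, hk.trans hkq, ?_⟩
    · calc i / (t * d) / b = i / d / (b * t) := Nat.div_div_eq_div_div (by ring) i
        _ = j / d / c / s := by rw [hq, Nat.div_div_eq_div_mul (j / d), mul_comm s]
        _ = k / (t * d) / (s * r) := by
          rw [← hkq, Nat.div_div_eq_div_mul (k / (t * d)), mul_comm r]
    · dsimp only
      rw [← Nat.mod_mul_left_mod k t, hkm, Nat.mod_mul_left_mod, hm]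

theorem existsUnique_linked_and_linked {y : ℕ} (htd : 0 < t * d) (hy : y < r)
    (hij : Linked ⟨a, b * t, s * c, d⟩ i j) (hj : j < a * s * c * d) :
    ∃! k : Fin (a * (s * r) * (t * d)),
      Linked ⟨a, b, s * r, t * d⟩ i k ∧ Linked ⟨a * s, t * r, c, d⟩ k j ∧ k / (t * d) % r = y := by
  have hiff : ∀ k, Linked ⟨a, b, s * r, t * d⟩ i k ∧ Linked ⟨a * s, t * r, c, d⟩ k j ∧
      k / (t * d) % r = y ↔ k = i % (t * d) + t * d * (y + r * (j / d / c)) := by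
    intro k
    rw [← and_assoc, linked_and_linked_iff hij,
      Nat.eq_add_mul_add_mul_iff (Nat.mod_lt _ htd) hy]
    tauto
  have hlt : i % (t * d) + t * d * (y + r * (j / d / c)) < a * (s * r) * (t * d) := by
    have hx : j / d / c < a * s :=
      Nat.div_lt_of_lt_mul (Nat.div_lt_of_lt_mul (by linarith))
    calc i % (t * d) + t * d * (y + r * (j / d / c))
        < t * d + t * d * (y + r * (j / d / c)) := by have := Nat.mod_lt i htd; omega
      _ = t * d * (y + 1 + r * (j / d / c)) := by ring
      _ ≤ t * d * (r + r * (j / d / c)) := by gcongr; omega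
      _ = t * d * r * (j / d / c + 1) := by ring
      _ ≤ t * d * r * (a * s) := by gcongr; omega
      _ = a * (s * r) * (t * d) := by ring
  exact ⟨⟨_, hlt⟩, (hiff _).2 rfl, fun k hk => Fin.ext ((hiff k).1 hk)⟩

theorem hasLinkedFactorization_of_c_le (htd : 0 < t * d) (hc : 0 < c) (hcr : c ≤ r)
    (A : Matrix (Fin (a * b * (t * d))) (Fin (a * s * c * d)) ℂ)
    (hA : ∀ i j, A i j ≠ 0 → Linked ⟨a, b * t, s * c, d⟩ i j) :
    HasLinkedFactorization ⟨a, b, s * r, t * d⟩ ⟨a * s, t * r, c, d⟩ A := by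
  obtain ⟨X, Y, hX, hY, hXY⟩ := A.exists_mul_eq_of_existsUnique
    (fun i (k : Fin (a * (s * r) * (t * d))) => Linked ⟨a, b, s * r, t * d⟩ i k)
    (fun k j => Linked ⟨a * s, t * r, c, d⟩ k j ∧ (k : ℕ) / (t * d) % r = j / d % c)
    (fun _ _ _ ⟨⟨hq, hm⟩, hy⟩ ⟨⟨hq', hm'⟩, hy'⟩ => Fin.ext <|
      Nat.ext_div_mod (Nat.ext_div_mod (hq.symm.trans hq') (hy.symm.trans hy')) (hm.symm.trans hm'))
    fun i j hij => existsUnique_linked_and_linked htd ((Nat.mod_lt _ hc).trans_le hcr)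
      (hA i j hij) j.2
  exact ⟨X, Y, hX, fun k j hkj => (hY k j hkj).1, hXY⟩

theorem hasLinkedFactorization_of_b_le (htd : 0 < t * d) (hb : 0 < b) (hbr : b ≤ r)
    (A : Matrix (Fin (a * b * (t * d))) (Fin (a * s * c * d)) ℂ)
    (hA : ∀ i j, A i j ≠ 0 → Linked ⟨a, b * t, s * c, d⟩ i j) :
    HasLinkedFactorization ⟨a, b, s * r, t * d⟩ ⟨a * s, t * r, c, d⟩ A := by
  obtain ⟨X, Y, hX, hY, hXY⟩ := A.exists_mul_eq_of_existsUnique'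
    (fun i (k : Fin (a * (s * r) * (t * d))) =>
      Linked ⟨a, b, s * r, t * d⟩ i k ∧ (k : ℕ) / (t * d) % r = i / (t * d) % b)
    (fun k j => Linked ⟨a * s, t * r, c, d⟩ k j)
    (fun _ _ _ ⟨⟨hq, hm⟩, hy⟩ ⟨⟨hq', hm'⟩, hy'⟩ => Fin.ext <|
      Nat.ext_div_mod (Nat.ext_div_mod (hq.trans hq'.symm) (hy.symm.trans hy')) (hm.trans hm'.symm))
    fun i j hij => by
      rw [existsUnique_congr fun k => and_right_comm.trans and_assoc]
      exact existsUnique_linked_and_linked htd ((Nat.mod_lt _ hb).trans_le hbr)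
        (hA i j hij) j.2
  exact ⟨X, Y, fun i k hik => (hX i k hik).1, hY, hXY⟩

theorem hasLinkedFactorization (htd : 0 < t * d) (hb : 0 < b) (hc : 0 < c) (hred : min b c ≤ r)
    (A : Matrix (Fin (a * b * (t * d))) (Fin (a * s * c * d)) ℂ)
    (hA : ∀ i j, A i j ≠ 0 → Linked ⟨a, b * t, s * c, d⟩ i j) :
    HasLinkedFactorization ⟨a, b, s * r, t * d⟩ ⟨a * s, t * r, c, d⟩ A := by
  rcases le_total b c with hbc | hcb
  · exact hasLinkedFactorization_of_b_le htd hb ((min_eq_left hbc).symm.trans_le hred) A hA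
  · exact hasLinkedFactorization_of_c_le htd hc ((min_eq_right hcb).symm.trans_le hred) A hA

end Pattern

/-- **Lemma.** For a chainable *redundant* pair `(π₁, π₂)`:
(1) `B^{(π₁,π₂)} = D^{π₁*π₂}`, i.e. every matrix supported in `S_{π₁*π₂}` factors as
`X₁X₂` with `Xᵢ ∈ D^{πᵢ}`; and (2) `‖π₁*π₂‖₀ = b₁d₁a₂c₂ < ‖π₁‖₀ + ‖π₂‖₀`. -/
theorem redundant_pair_collapse (π₁ π₂ : Pattern)
    (h₁ : π₁.Pos) (h₂ : π₂.Pos) (hch : Pattern.Chainable π₁ π₂)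
    (hred : RedundantPair π₁ π₂)
    (hdim : π₁.cols = π₂.rows)
    (hr : (π₁ * π₂).rows = π₁.rows) (hc : (π₁ * π₂).cols = π₂.cols) :
    (∀ A : Matrix (Fin π₁.rows) (Fin π₂.cols) ℂ,
      (∀ i j, castMat hr hc (π₁ * π₂).S i j = 0 → A i j = 0) ↔
        ∃ (X₁ : Matrix (Fin π₁.rows) (Fin π₁.cols) ℂ)
          (X₂ : Matrix (Fin π₂.rows) (Fin π₂.cols) ℂ),
          IsFactor π₁ X₁ ∧ IsFactor π₂ X₂ ∧ A = X₁ * castMat hdim.symm rfl X₂) ∧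
    Pattern.norm0 (π₁ * π₂) = π₁.b * π₁.d * (π₂.a * π₂.c) ∧
    Pattern.norm0 (π₁ * π₂) < Pattern.norm0 π₁ + Pattern.norm0 π₂ := by
  obtain ⟨s, t, hs, ht, hc₁, hb₂⟩ := hch.exists_eq_mul h₁.1 h₂.2.2.2
  unfold RedundantPair at hred
  generalize Pattern.rk π₁ π₂ = r at hc₁ hb₂ hred
  obtain ⟨a, b, c₁, d₁⟩ := π₁
  obtain ⟨a₂, b₂, c, d⟩ := π₂
  obtain ⟨ha, hb, -, htd⟩ := h₁
  obtain ⟨has, -, hc₂, hd⟩ := h₂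
  dsimp only at hs ht hc₁ hb₂ hred ha hb htd has hc₂ hd
  subst hs ht hc₁ hb₂
  have hmul : (⟨a, b, s * r, t * d⟩ * ⟨a * s, t * r, c, d⟩ : Pattern) = ⟨a, b * t, s * c, d⟩ :=
    Pattern.mk_mul_mk ha hd
  have hsupp : ∀ i j, castMat hr hc (Pattern.S (_ * _)) i j = 0 ↔
      ¬Pattern.Linked ⟨a, b * t, s * c, d⟩ i j := fun i j => by
    rw [Pattern.castMat_S_eq_zero_iff, hmul]
  refine ⟨fun A => ⟨fun hA => ?_, ?_⟩, by rw [hmul, Pattern.norm0]; ring,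
    by rw [hmul]; exact Pattern.norm0_mk_lt has htd hb hc₂ hred⟩
  · obtain ⟨X, Y, hX, hY, rfl⟩ := Pattern.hasLinkedFactorization htd hb hc₂ hred A
      fun i j hij => by_contra fun h => hij (hA i j ((hsupp i j).2 h))
    exact ⟨X, castMat hdim rfl Y, (Pattern.isFactor_iff _ _).2 hX,
      (Pattern.isFactor_iff _ _).2 fun k j => hY _ j, rfl⟩
  · rintro ⟨X₁, X₂, hX₁, hX₂, rfl⟩ i j hij
    by_contra h
    exact (hsupp i j).1 hij <| Pattern.linked_of_mul_apply_ne_zero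
      ((Pattern.isFactor_iff _ _).1 hX₁) (fun k j => (Pattern.isFactor_iff _ _).1 hX₂ _ j) h
end
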